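/- Let κ > 0, let k be a positive integer, and set Det(λ) = 2κ²λ^{−1/2}(1−cos√λ)(1+κ²/λ) − sin(√λ)(κ²/√λ+√λ)² for λ > 0. Then Det is differentiable at λ = (2kπ)² with derivative Det'((2kπ)²) = −(2kπ + κ²/(2kπ))²/(4kπ); in particular Det'((2kπ)²) ≠ 0, so the root (2kπ)² of Det is simple. -/

import Mathlib

/-- The determinant `Det(λ)` of the 2×2 linear system obtained by imposing the
non-local boundary conditions on `a·sin(√λ x) + b·cos(√λ x)`. -/
noncomputable def Det (κ l : ℝ) : ℝ :=
  2 * κ ^ 2 / Real.sqrt l * (1 - Real.cos (Real.sqrt l)) * (1 + κ ^ 2 / l)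
    - Real.sin (Real.sqrt l) * (κ ^ 2 / Real.sqrt l + Real.sqrt l) ^ 2

/-!
Write `Det κ λ = F(√λ)` with `F(s) = 2κ²/s·(1 - cos s)(1 + κ²/s²) - sin s·(κ²/s + s)²`.
At `s = 2kπ` both `1 - cos s` and its derivative `sin s` vanish, so only the second term
contributes to `F'(s)`, namely `-cos s·(κ²/s + s)² = -(κ²/s + s)²`. The chain rule through
`√λ` divides this by `2s = 4kπ`.
-/

open Real

noncomputable def detOfSqrt (κ s : ℝ) : ℝ :=
  2 * κ ^ 2 / s * (1 - cos s) * (1 + κ ^ 2 / s ^ 2) - sin s * (κ ^ 2 / s + s) ^ 2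

lemma det_eq_detOfSqrt_sqrt (κ : ℝ) {l : ℝ} (hl : 0 ≤ l) : Det κ l = detOfSqrt κ (√l) := by
  rw [Det, detOfSqrt, sq_sqrt hl]

lemma hasDerivAt_detOfSqrt_of_cos_eq_one (κ : ℝ) {s : ℝ} (hs : s ≠ 0) (hcos : cos s = 1) :
    HasDerivAt (detOfSqrt κ) (-(κ ^ 2 / s + s) ^ 2) s := by
  have hsin : sin s = 0 := sin_eq_zero_iff_cos_eq.2 (Or.inl hcos)
  have hprefactor : DifferentiableAt ℝ (fun x : ℝ => 2 * κ ^ 2 / x * (1 + κ ^ 2 / x ^ 2)) s := by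
    fun_prop (disch := simp [hs])
  have hbracket : DifferentiableAt ℝ (fun x : ℝ => (κ ^ 2 / x + x) ^ 2) s := by
    fun_prop (disch := simp [hs])
  -- The unknown derivatives of the two factors get multiplied by `1 - cos s = 0` and `sin s = 0`.
  have hderiv := (hprefactor.hasDerivAt.mul ((hasDerivAt_const s 1).sub (hasDerivAt_cos s))).sub
    ((hasDerivAt_sin s).mul hbracket.hasDerivAt)
  refine hderiv.congr_of_eventuallyEq (.of_forall fun x => ?_) |>.congr_deriv ?_
  · simp only [detOfSqrt, Pi.sub_apply, Pi.mul_apply]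
    ring
  · simp only [Pi.sub_apply, hsin, hcos]
    ring

lemma HasDerivAt.comp_sqrt_of_sq {f : ℝ → ℝ} {f' s : ℝ} (hs : 0 < s) (hf : HasDerivAt f f' s) :
    HasDerivAt (fun l => f √l) (f' / (2 * s)) (s ^ 2) := by
  have hsqrt : HasDerivAt Real.sqrt (1 / (2 * s)) (s ^ 2) := by
    simpa [sqrt_sq hs.le] using hasDerivAt_sqrt (pow_pos hs 2).ne'
  rw [← sqrt_sq hs.le] at hf
  exact (hf.comp (s ^ 2) hsqrt).congr_deriv (mul_one_div f' _)

lemma hasDerivAt_det_of_cos_eq_one (κ : ℝ) {s : ℝ} (hs : 0 < s) (hcos : cos s = 1) :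
    HasDerivAt (Det κ) (-(κ ^ 2 / s + s) ^ 2 / (2 * s)) (s ^ 2) := by
  have hdet : (fun l => detOfSqrt κ √l) =ᶠ[nhds (s ^ 2)] Det κ := by
    filter_upwards [eventually_gt_nhds (pow_pos hs 2)] with l hl
    exact (det_eq_detOfSqrt_sqrt κ hl.le).symm
  exact ((hasDerivAt_detOfSqrt_of_cos_eq_one κ hs.ne' hcos).comp_sqrt_of_sq hs).congr_of_eventuallyEq
    hdet.symm

theorem det_deriv_at_even_roots_general (κ : ℝ) (k : ℕ) (hk : 0 < k) :
    HasDerivAt (Det κ)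
      (-(2 * (k:ℝ) * Real.pi + κ ^ 2 / (2 * (k:ℝ) * Real.pi)) ^ 2
        / (4 * (k:ℝ) * Real.pi))
      ((2 * (k:ℝ) * Real.pi) ^ 2) ∧
    (-(2 * (k:ℝ) * Real.pi + κ ^ 2 / (2 * (k:ℝ) * Real.pi)) ^ 2
        / (4 * (k:ℝ) * Real.pi)) ≠ 0 := by
  have hs : 0 < 2 * (k:ℝ) * π := by positivity
  have hcos : cos (2 * (k:ℝ) * π) = 1 := by
    rw [mul_comm 2, mul_assoc, cos_nat_mul_two_pi]
  constructor
  · convert hasDerivAt_det_of_cos_eq_one κ hs hcos using 1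
    ring
  · exact div_ne_zero (neg_ne_zero.2 (pow_ne_zero 2 (by positivity))) (by positivity)

/-- **Simplicity of the even-mode roots.** For each positive integer `k`,
`Det` is differentiable at `λ = (2kπ)²` with
`Det'((2kπ)²) = -(2kπ + κ²/(2kπ))²/(4kπ) ≠ 0`, so the root `(2kπ)²` is
simple. -/
theorem det_deriv_at_even_roots (κ : ℝ) (hκ : 0 < κ) (k : ℕ) (hk : 0 < k) :
    HasDerivAt (Det κ)
      (-(2 * (k:ℝ) * Real.pi + κ ^ 2 / (2 * (k:ℝ) * Real.pi)) ^ 2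
        / (4 * (k:ℝ) * Real.pi))
      ((2 * (k:ℝ) * Real.pi) ^ 2) ∧
    (-(2 * (k:ℝ) * Real.pi + κ ^ 2 / (2 * (k:ℝ) * Real.pi)) ^ 2
        / (4 * (k:ℝ) * Real.pi)) ≠ 0 :=
  det_deriv_at_even_roots_general κ k hk
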